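/- arXiv:1307.1953 — 3 statements merged into one kernel-verified Lean document; each statement's English description precedes it below -/
import Mathlib

section
/- Under the assumptions above, if D ≤ R then |DBA| ≤ R·|v_j - v_i|/|x_j - x_i|². In particular, a collision threat (minimal distance below threshold R) forces the derivative of the bearing angle to be small when the pedestrians are far apart. -/
open scoped RealInnerProductSpace

noncomputable section

abbrev V2 := EuclideanSpace ℝ (Fin 2)

/-- 2D cross product: A × B = a₁b₂ - a₂b₁. -/
def cross2 (a b : V2) : ℝ := a 0 * b 1 - a 1 * b 0

lemma cross2_sq (x v : V2) :
    cross2 x v ^ 2 = ‖x‖ ^ 2 * ‖v‖ ^ 2 - ⟪x, v⟫ ^ 2 := by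
  have hx : ‖x‖ ^ 2 = x 0 * x 0 + x 1 * x 1 := by
    rw [← real_inner_self_eq_norm_sq]
    simp [RCLike.inner_apply, Fin.sum_univ_two, PiLp.inner_apply]
    rw [EuclideanSpace.norm_eq, Real.sq_sqrt (by positivity)]; simp [Fin.sum_univ_two, sq]
  have hv : ‖v‖ ^ 2 = v 0 * v 0 + v 1 * v 1 := by
    rw [← real_inner_self_eq_norm_sq]
    simp [RCLike.inner_apply, Fin.sum_univ_two, PiLp.inner_apply]
    rw [EuclideanSpace.norm_eq, Real.sq_sqrt (by positivity)]; simp [Fin.sum_univ_two, sq]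
  have hxv : ⟪x, v⟫ = x 0 * v 0 + x 1 * v 1 := by
    simp [RCLike.inner_apply, Fin.sum_univ_two, PiLp.inner_apply]
    ring
  rw [hx, hv, hxv, cross2]; ring

/-- A collision threat (minimal distance below R) forces the derivative of the bearing
    angle to be small: |DBA| ≤ R·|v_j - v_i|/|x_j - x_i|². -/
theorem stmt4 (xi xj vi vj : V2) (hx : xi ≠ xj) (hv : vi ≠ vj) (R : ℝ) (hR : 0 < R)
    (DBA : ℝ) (hDBA : DBA = cross2 (xj - xi) (vj - vi) / ‖xj - xi‖ ^ 2)
    (D : ℝ) (hD : D = Real.sqrt (‖xj - xi‖ ^ 2 - ⟪xj - xi, ‖vj - vi‖⁻¹ • (vj - vi)⟫ ^ 2))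
    (hDR : D ≤ R) :
    |DBA| ≤ R * ‖vj - vi‖ / ‖xj - xi‖ ^ 2 := by
  set x := xj - xi with hxdef
  set v := vj - vi with hvdef
  have hxn : ‖x‖ ≠ 0 := by
    simp [hxdef, sub_eq_zero]; exact fun h => hx h.symm
  have hvn : ‖v‖ ≠ 0 := by
    simp [hvdef, sub_eq_zero]; exact fun h => hv h.symm
  have hvpos : 0 < ‖v‖ := lt_of_le_of_ne (norm_nonneg _) (Ne.symm hvn)
  have hxpos : 0 < ‖x‖ ^ 2 := by positivity
  have hin : ⟪x, ‖v‖⁻¹ • v⟫ = ‖v‖⁻¹ * ⟪x, v⟫ := real_inner_smul_right x v _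
  have key : ‖x‖ ^ 2 - ⟪x, ‖v‖⁻¹ • v⟫ ^ 2 = (cross2 x v / ‖v‖) ^ 2 := by
    obtain ⟨c, hc⟩ : ∃ c : ℝ, ⟪x, v⟫ = c := ⟨_, rfl⟩
    have hcr := cross2_sq x v
    rw [hc] at hcr
    rw [hin, hc, div_pow, hcr]
    have h2 : (‖v‖ : ℝ) ^ 2 ≠ 0 := pow_ne_zero _ hvn
    field_simp
  have hDval : D = |cross2 x v| / ‖v‖ := by
    rw [hD, key, Real.sqrt_sq_eq_abs, abs_div, abs_of_pos hvpos]
  have hle : |cross2 x v| ≤ R * ‖v‖ := by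
    have : |cross2 x v| / ‖v‖ ≤ R := hDval ▸ hDR
    calc |cross2 x v| = |cross2 x v| / ‖v‖ * ‖v‖ := by field_simp
    _ ≤ R * ‖v‖ := by exact mul_le_mul_of_nonneg_right this (norm_nonneg v)
  rw [hDBA, abs_div, abs_of_pos hxpos]
  gcongr
end
end

section
/- For the von Mises-Fisher distribution M on S¹ with concentration β and mean direction Ω, the second moment tensor satisfies ∫_{S¹} M(u) (u ⊗ u) du = γ_∥ Ω ⊗ Ω + γ_⊥ Ω^⊥ ⊗ Ω^⊥, where γ_∥ = (1/2)(1 + I₂(β)/I₀(β)) and γ_⊥ = (1/2)(1 - I₂(β)/I₀(β)). In particular this matrix is symmetric positive definite for all β ≥ 0 (since I₂(β) < I₀(β)). -/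
open Real

noncomputable section

/-- Modified Bessel function of the first kind:
    I_k(x) = (1/π) ∫₀^π e^{x cos θ} cos(kθ) dθ. -/
def besselI (k : ℕ) (x : ℝ) : ℝ :=
  (1 / π) * ∫ θ in (0:ℝ)..π, Real.exp (x * Real.cos θ) * Real.cos (k * θ)

/-- Outer product of two vectors of ℝ². -/
def outer (a b : Fin 2 → ℝ) : Matrix (Fin 2) (Fin 2) ℝ :=
  Matrix.of fun i j => a i * b j

open intervalIntegral

lemma key_cos (β : ℝ) (k : ℕ) :
    ∫ θ in (0:ℝ)..(2*π), Real.exp (β * Real.cos θ) * Real.cos (k*θ)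
      = 2 * π * besselI k β := by
  have hint : ∀ a b : ℝ, IntervalIntegrable
      (fun θ => Real.exp (β * Real.cos θ) * Real.cos (k*θ)) MeasureTheory.volume a b :=
    fun a b => (Continuous.intervalIntegrable (by continuity) a b)
  have hsplit := integral_add_adjacent_intervals (hint 0 π) (hint π (2*π))
  have hsub := integral_comp_sub_left
      (fun θ => Real.exp (β * Real.cos θ) * Real.cos (k*θ)) (2*π) (a := 0) (b := π)
  have heq : (∫ x in (0:ℝ)..π, Real.exp (β * Real.cos (2*π - x)) * Real.cos (k*(2*π - x)))
      = ∫ x in (0:ℝ)..π, Real.exp (β * Real.cos x) * Real.cos (k*x) := by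
    apply integral_congr
    intro x _
    beta_reduce
    have h1 : Real.cos (2*π - x) = Real.cos x := by
      rw [Real.cos_sub]; simp [Real.cos_two_pi, Real.sin_two_pi]
    have h2 : Real.cos (k*(2*π - x)) = Real.cos (k*x) := by
      have : (k:ℝ)*(2*π - x) = (k:ℤ)*(2*π) - k*x := by push_cast; ring
      rw [this, Real.cos_int_mul_two_pi_sub]
    rw [h1, h2]
  have : (∫ x in π..(2*π), Real.exp (β * Real.cos x) * Real.cos (k*x))
      = ∫ x in (0:ℝ)..π, Real.exp (β * Real.cos x) * Real.cos (k*x) := by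
    rw [show (2:ℝ)*π - π = π by ring, show (2:ℝ)*π - 0 = 2*π by ring] at hsub
    rw [← hsub, heq]
  rw [← hsplit, this, besselI]
  have hπ : (π:ℝ) ≠ 0 := Real.pi_ne_zero
  field_simp
  ring

lemma key_sin (β : ℝ) (k : ℕ) :
    ∫ θ in (0:ℝ)..(2*π), Real.exp (β * Real.cos θ) * Real.sin (k*θ) = 0 := by
  have hint : ∀ a b : ℝ, IntervalIntegrable
      (fun θ => Real.exp (β * Real.cos θ) * Real.sin (k*θ)) MeasureTheory.volume a b :=
    fun a b => (Continuous.intervalIntegrable (by continuity) a b)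
  have hsplit := integral_add_adjacent_intervals (hint 0 π) (hint π (2*π))
  have hsub := integral_comp_sub_left
      (fun θ => Real.exp (β * Real.cos θ) * Real.sin (k*θ)) (2*π) (a := 0) (b := π)
  have heq : (∫ x in (0:ℝ)..π, Real.exp (β * Real.cos (2*π - x)) * Real.sin (k*(2*π - x)))
      = ∫ x in (0:ℝ)..π, -(Real.exp (β * Real.cos x) * Real.sin (k*x)) := by
    apply integral_congr
    intro x _
    beta_reduce
    have h1 : Real.cos (2*π - x) = Real.cos x := by
      rw [Real.cos_sub]; simp [Real.cos_two_pi, Real.sin_two_pi]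
    have h2 : Real.sin (k*(2*π - x)) = -Real.sin (k*x) := by
      have h3 : (k:ℝ)*(2*π - x) = k*(2*π) - k*x := by ring
      rw [h3, Real.sin_sub]
      have h4 : Real.sin ((k:ℝ)*(2*π)) = 0 := by
        have : (k:ℝ)*(2*π) = (2*k:ℕ)*π := by push_cast; ring
        rw [this, Real.sin_nat_mul_pi]
      have h5 : Real.cos ((k:ℝ)*(2*π)) = 1 := by
        have : (k:ℝ)*(2*π) = (k:ℤ)*(2*π) := by push_cast; ring
        rw [this, Real.cos_int_mul_two_pi]
      rw [h4, h5]; ring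
    rw [h1, h2]; ring
  rw [integral_neg] at heq
  have : (∫ x in π..(2*π), Real.exp (β * Real.cos x) * Real.sin (k*x))
      = -∫ x in (0:ℝ)..π, Real.exp (β * Real.cos x) * Real.sin (k*x) := by
    rw [show (2:ℝ)*π - π = π by ring, show (2:ℝ)*π - 0 = 2*π by ring] at hsub
    rw [← hsub, heq]
  rw [← hsplit, this]; ring

lemma combo (β a b c : ℝ) :
    ∫ ψ in (0:ℝ)..(2*π),
        Real.exp (β * Real.cos ψ) * (a + b * Real.cos (2*ψ) + c * Real.sin (2*ψ))
      = a * (2 * π * besselI 0 β) + b * (2 * π * besselI 2 β) := by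
  have h0 := key_cos β 0
  have h2 := key_cos β 2
  have hs := key_sin β 2
  push_cast at h0 h2 hs
  have hi : ∀ (k : ℝ), IntervalIntegrable
      (fun θ => Real.exp (β * Real.cos θ) * Real.cos (k*θ)) MeasureTheory.volume 0 (2*π) :=
    fun k => (Continuous.intervalIntegrable (by continuity) _ _)
  have his : IntervalIntegrable
      (fun θ => Real.exp (β * Real.cos θ) * Real.sin (2*θ)) MeasureTheory.volume 0 (2*π) :=
    (Continuous.intervalIntegrable (by continuity) _ _)
  have expand : ∀ ψ : ℝ, Real.exp (β * Real.cos ψ) * (a + b * Real.cos (2*ψ) + c * Real.sin (2*ψ))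
      = a * (Real.exp (β * Real.cos ψ) * Real.cos (0*ψ))
        + b * (Real.exp (β * Real.cos ψ) * Real.cos (2*ψ))
        + c * (Real.exp (β * Real.cos ψ) * Real.sin (2*ψ)) := by
    intro ψ; rw [zero_mul, Real.cos_zero]; ring
  rw [integral_congr (fun ψ _ => expand ψ)]
  rw [integral_add (((hi 0).const_mul a).add ((hi 2).const_mul b)) (his.const_mul c),
      integral_add ((hi 0).const_mul a) ((hi 2).const_mul b),
      integral_const_mul, integral_const_mul, integral_const_mul, h0, h2, hs]
  ring

lemma entry (β φ a b c : ℝ) (T : ℝ → ℝ)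
    (hT : ∀ ψ : ℝ, T (ψ + φ) = a + b * Real.cos (2*ψ) + c * Real.sin (2*ψ)) :
    ∫ θ in (0:ℝ)..(2*π), Real.exp (β * Real.cos (θ - φ)) * T θ
      = a * (2 * π * besselI 0 β) + b * (2 * π * besselI 2 β) := by
  set g : ℝ → ℝ := fun ψ => Real.exp (β * Real.cos ψ) * T (ψ + φ) with hg
  have hshift : ∫ θ in (0:ℝ)..(2*π), Real.exp (β * Real.cos (θ - φ)) * T θ
      = ∫ θ in (0:ℝ)..(2*π), g θ := by
    have h1 : ∀ θ : ℝ, Real.exp (β * Real.cos (θ - φ)) * T θ = g (θ - φ) := by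
      intro θ; simp [hg, sub_add_cancel]
    rw [integral_congr (fun θ _ => h1 θ)]
    rw [integral_comp_sub_right g φ]
    have hper : Function.Periodic g (2*π) := by
      intro ψ
      simp only [hg]
      have hc : Real.cos (ψ + 2*π) = Real.cos ψ := Real.cos_add_two_pi ψ
      have ht : T (ψ + 2*π + φ) = T (ψ + φ) := by
        have e1 : ψ + 2*π + φ = (ψ + 2*π) + φ := by ring
        rw [e1, hT (ψ + 2*π), hT ψ]
        have : Real.cos (2*(ψ+2*π)) = Real.cos (2*ψ) := by
          rw [show 2*(ψ+2*π) = 2*ψ + 2*(2*π) by ring]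
          rw [show (2:ℝ)*(2*π) = ((2:ℤ):ℝ)*(2*π) by push_cast; ring]
          exact Real.cos_add_int_mul_two_pi _ 2
        have hsin : Real.sin (2*(ψ+2*π)) = Real.sin (2*ψ) := by
          rw [show 2*(ψ+2*π) = 2*ψ + 2*(2*π) by ring]
          rw [show (2:ℝ)*(2*π) = ((2:ℤ):ℝ)*(2*π) by push_cast; ring]
          exact Real.sin_add_int_mul_two_pi _ 2
        rw [this, hsin]
      rw [hc, ht]
    have := hper.intervalIntegral_add_eq (-φ) 0
    simpa [show -φ + 2*π = 2*π - φ by ring] using this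
  rw [hshift]
  have : ∫ θ in (0:ℝ)..(2*π), g θ
      = ∫ ψ in (0:ℝ)..(2*π),
          Real.exp (β * Real.cos ψ) * (a + b * Real.cos (2*ψ) + c * Real.sin (2*ψ)) := by
    apply integral_congr; intro ψ _; simp only [hg]; rw [hT ψ]
  rw [this, combo]

lemma besselI0_pos (β : ℝ) : 0 < besselI 0 β := by
  rw [besselI]
  have h : 0 < ∫ θ in (0:ℝ)..π, Real.exp (β * Real.cos θ) * Real.cos ((0:ℕ) * θ) := by
    apply intervalIntegral_pos_of_pos_on (Continuous.intervalIntegrable (by continuity) _ _)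
    · intro x _; simp [Real.exp_pos]
    · exact Real.pi_pos
  positivity

lemma besselI_sub_pos (β : ℝ) : 0 < besselI 0 β - besselI 2 β := by
  have hi : ∀ (k : ℕ), IntervalIntegrable
      (fun θ => Real.exp (β * Real.cos θ) * Real.cos ((k:ℝ)*θ)) MeasureTheory.volume 0 π :=
    fun k => (Continuous.intervalIntegrable (by continuity) _ _)
  have hdiff : besselI 0 β - besselI 2 β
      = (1/π) * ∫ θ in (0:ℝ)..π, Real.exp (β * Real.cos θ) * (2 * Real.sin θ ^ 2) := by
    rw [besselI, besselI, ← mul_sub, ← integral_sub (hi 0) (hi 2)]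
    congr 1
    apply integral_congr; intro θ _
    beta_reduce
    push_cast
    rw [Real.cos_two_mul]
    have := Real.sin_sq_add_cos_sq θ
    simp only [zero_mul, Real.cos_zero]
    linear_combination (-2*Real.exp (β * Real.cos θ)) * this
  rw [hdiff]
  have h : 0 < ∫ θ in (0:ℝ)..π, Real.exp (β * Real.cos θ) * (2 * Real.sin θ ^ 2) := by
    apply intervalIntegral_pos_of_pos_on (Continuous.intervalIntegrable (by continuity) _ _)
    · intro x hx
      have hs : 0 < Real.sin x := Real.sin_pos_of_pos_of_lt_pi hx.1 hx.2
      positivity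
    · exact Real.pi_pos
  positivity

lemma besselI_add_pos (β : ℝ) : 0 < besselI 0 β + besselI 2 β := by
  have hi : ∀ (k : ℕ), IntervalIntegrable
      (fun θ => Real.exp (β * Real.cos θ) * Real.cos ((k:ℝ)*θ)) MeasureTheory.volume 0 π :=
    fun k => (Continuous.intervalIntegrable (by continuity) _ _)
  have hdiff : besselI 0 β + besselI 2 β
      = (1/π) * ∫ θ in (0:ℝ)..π, Real.exp (β * Real.cos θ) * (2 * Real.cos θ ^ 2) := by
    rw [besselI, besselI, ← mul_add, ← integral_add (hi 0) (hi 2)]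
    congr 1
    apply integral_congr; intro θ _
    beta_reduce
    push_cast
    rw [Real.cos_two_mul]
    simp only [zero_mul, Real.cos_zero]
    ring
  rw [hdiff]
  have h1 : IntervalIntegrable (fun θ => Real.exp (β * Real.cos θ) * (2 * Real.cos θ ^ 2))
      MeasureTheory.volume 0 (π/3) := Continuous.intervalIntegrable (by continuity) _ _
  have h2 : IntervalIntegrable (fun θ => Real.exp (β * Real.cos θ) * (2 * Real.cos θ ^ 2))
      MeasureTheory.volume (π/3) π := Continuous.intervalIntegrable (by continuity) _ _
  have hsplit := integral_add_adjacent_intervals h1 h2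
  have hpos : 0 < ∫ θ in (0:ℝ)..(π/3), Real.exp (β * Real.cos θ) * (2 * Real.cos θ ^ 2) := by
    apply intervalIntegral_pos_of_pos_on h1
    · intro x hx
      have hc : 0 < Real.cos x := by
        apply Real.cos_pos_of_mem_Ioo
        constructor
        · linarith [hx.1, Real.pi_pos]
        · have := hx.2; nlinarith [Real.pi_pos]
      positivity
    · linarith [Real.pi_pos]
  have hnn : 0 ≤ ∫ θ in (π/3)..π, Real.exp (β * Real.cos θ) * (2 * Real.cos θ ^ 2) := by
    apply integral_nonneg (by linarith [Real.pi_pos])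
    intro x _
    positivity
  have hI : 0 < ∫ θ in (0:ℝ)..π, Real.exp (β * Real.cos θ) * (2 * Real.cos θ ^ 2) := by
    rw [← hsplit]; linarith
  positivity

lemma trig00 (ψ φ : ℝ) : Real.cos (ψ+φ) * Real.cos (ψ+φ)
    = 1/2 + (Real.cos (2*φ)/2) * Real.cos (2*ψ) + (-(Real.sin (2*φ))/2) * Real.sin (2*ψ) := by
  rw [show Real.cos (ψ+φ) * Real.cos (ψ+φ) = Real.cos (ψ+φ)^2 by ring, Real.cos_sq,
    show 2*(ψ+φ) = 2*ψ + 2*φ by ring, Real.cos_add]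
  ring

lemma trig01 (ψ φ : ℝ) : Real.cos (ψ+φ) * Real.sin (ψ+φ)
    = 0 + (Real.sin (2*φ)/2) * Real.cos (2*ψ) + (Real.cos (2*φ)/2) * Real.sin (2*ψ) := by
  rw [show Real.cos (ψ+φ) * Real.sin (ψ+φ) = Real.sin (2*(ψ+φ))/2 by rw [Real.sin_two_mul]; ring,
    show 2*(ψ+φ) = 2*ψ + 2*φ by ring, Real.sin_add]
  ring

lemma trig11 (ψ φ : ℝ) : Real.sin (ψ+φ) * Real.sin (ψ+φ)
    = 1/2 + (-(Real.cos (2*φ))/2) * Real.cos (2*ψ) + (Real.sin (2*φ)/2) * Real.sin (2*ψ) := by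
  rw [show Real.sin (ψ+φ) * Real.sin (ψ+φ) = Real.sin (ψ+φ)^2 by ring, Real.sin_sq_eq_half_sub,
    show 2*(ψ+φ) = 2*ψ + 2*φ by ring, Real.cos_add]
  ring

/-- The second moment tensor of the von Mises-Fisher distribution is
    γ_∥ Ω⊗Ω + γ_⊥ Ω^⊥⊗Ω^⊥ with γ_∥ = (1/2)(1 + I₂/I₀), γ_⊥ = (1/2)(1 - I₂/I₀);
    it is symmetric positive definite. -/
theorem stmt16 (β φ : ℝ) (hβ : 0 ≤ β)
    (M : ℝ → ℝ)
    (hM : ∀ θ, M θ = Real.exp (β * Real.cos (θ - φ)) / (2 * π * besselI 0 β))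
    (uvec : ℝ → Fin 2 → ℝ) (huvec : ∀ θ, uvec θ = ![Real.cos θ, Real.sin θ])
    (Ω Ωp : Fin 2 → ℝ) (hΩ : Ω = ![Real.cos φ, Real.sin φ])
    (hΩp : Ωp = ![-Real.sin φ, Real.cos φ])
    (S : Matrix (Fin 2) (Fin 2) ℝ)
    (hS : S = Matrix.of fun i j => ∫ θ in (0:ℝ)..(2 * π), M θ * uvec θ i * uvec θ j) :
    S = ((1 / 2) * (1 + besselI 2 β / besselI 0 β)) • outer Ω Ω
        + ((1 / 2) * (1 - besselI 2 β / besselI 0 β)) • outer Ωp Ωp ∧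
    besselI 2 β < besselI 0 β ∧ S.PosDef := by
  have hI0 := besselI0_pos β
  have hIs := besselI_sub_pos β
  have hIa := besselI_add_pos β
  have hπ := Real.pi_pos
  set r : ℝ := besselI 2 β / besselI 0 β with hr
  have hr1 : r < 1 := by rw [hr, div_lt_one hI0]; linarith
  have hr2 : -1 < r := by rw [hr, lt_div_iff₀ hI0]; linarith
  -- entry computation
  have main : ∀ (i j : Fin 2) (a b c : ℝ),
      (∀ ψ : ℝ, (![Real.cos (ψ+φ), Real.sin (ψ+φ)] i) * (![Real.cos (ψ+φ), Real.sin (ψ+φ)] j)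
        = a + b * Real.cos (2*ψ) + c * Real.sin (2*ψ)) →
      S i j = a + b * r := by
    intro i j a b c h
    rw [hS]
    show (∫ θ in (0:ℝ)..(2*π), M θ * uvec θ i * uvec θ j) = a + b * r
    have hcongr : ∀ θ : ℝ, M θ * uvec θ i * uvec θ j
        = (Real.exp (β * Real.cos (θ - φ)) *
            ((fun t => (![Real.cos t, Real.sin t] i) * (![Real.cos t, Real.sin t] j)) θ))
            / (2 * π * besselI 0 β) := by
      intro θ; rw [hM, huvec]; beta_reduce; ring
    rw [integral_congr (fun θ _ => hcongr θ), integral_div,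
        entry β φ a b c _ (fun ψ => h ψ)]
    rw [hr]
    field_simp
  have h00 : S 0 0 = 1/2 + (Real.cos (2*φ)/2) * r := by
    apply main 0 0 _ _ (-(Real.sin (2*φ))/2)
    intro ψ; simpa using trig00 ψ φ
  have h01 : S 0 1 = 0 + (Real.sin (2*φ)/2) * r := by
    apply main 0 1 _ _ (Real.cos (2*φ)/2)
    intro ψ; simpa using trig01 ψ φ
  have h10 : S 1 0 = 0 + (Real.sin (2*φ)/2) * r := by
    apply main 1 0 _ _ (Real.cos (2*φ)/2)
    intro ψ; simpa [mul_comm] using trig01 ψ φ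
  have h11 : S 1 1 = 1/2 + (-(Real.cos (2*φ))/2) * r := by
    apply main 1 1 _ _ (Real.sin (2*φ)/2)
    intro ψ; simpa using trig11 ψ φ
  have hpy := Real.sin_sq_add_cos_sq φ
  have hc2 := Real.cos_two_mul φ
  have hs2 := Real.sin_two_mul φ
  subst hΩ
  subst hΩp
  have hmat : S = ((1 / 2) * (1 + r)) • outer ![Real.cos φ, Real.sin φ] ![Real.cos φ, Real.sin φ]
      + ((1 / 2) * (1 - r)) • outer ![-Real.sin φ, Real.cos φ] ![-Real.sin φ, Real.cos φ] := by
    ext i j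
    fin_cases i <;> fin_cases j
    · show S 0 0 = 1/2*(1+r) * (Real.cos φ * Real.cos φ)
        + 1/2*(1-r) * (-Real.sin φ * -Real.sin φ)
      rw [h00, hc2]
      linear_combination ((r-1)/2) * hpy
    · show S 0 1 = 1/2*(1+r) * (Real.cos φ * Real.sin φ)
        + 1/2*(1-r) * (-Real.sin φ * Real.cos φ)
      rw [h01, hs2]; ring
    · show S 1 0 = 1/2*(1+r) * (Real.sin φ * Real.cos φ)
        + 1/2*(1-r) * (Real.cos φ * -Real.sin φ)
      rw [h10, hs2]; ring
    · show S 1 1 = 1/2*(1+r) * (Real.sin φ * Real.sin φ)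
        + 1/2*(1-r) * (Real.cos φ * Real.cos φ)
      rw [h11, hc2]
      linear_combination (-(1+r)/2) * hpy
  refine ⟨hmat, by linarith, ?_⟩
  refine Matrix.posDef_iff_dotProduct_mulVec.mpr ⟨?_, ?_⟩
  · -- Hermitian
    rw [Matrix.IsHermitian]
    ext i j
    rw [Matrix.conjTranspose_apply, star_trivial]
    fin_cases i <;> fin_cases j
    · rfl
    · show S 1 0 = S 0 1
      rw [h10, h01]
    · show S 0 1 = S 1 0
      rw [h10, h01]
    · rfl
  · intro x hx
    have hx01 : x 0 ≠ 0 ∨ x 1 ≠ 0 := by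
      by_contra h; push_neg at h
      exact hx (by ext i; fin_cases i <;> simp [h.1, h.2])
    have hq : 0 < x 0 ^ 2 + x 1 ^ 2 := by
      rcases hx01 with h | h
      · nlinarith [sq_pos_of_ne_zero h, sq_nonneg (x 1)]
      · nlinarith [sq_pos_of_ne_zero h, sq_nonneg (x 0)]
    have hval : dotProduct (star x) (S.mulVec x)
        = (1+r)/2 * (Real.cos φ * x 0 + Real.sin φ * x 1)^2
          + (1-r)/2 * (Real.sin φ * x 0 - Real.cos φ * x 1)^2 := by
      simp only [dotProduct, Matrix.mulVec, Fin.sum_univ_two, Pi.star_apply, star_trivial]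
      rw [h00, h01, h10, h11, hc2, hs2]
      linear_combination (-(x 0^2 + x 1^2)/2 + r/2*(x 0^2 - x 1^2)) * hpy
    rw [hval]
    have h1 : 0 < (1+r)/2 := by linarith
    have h2 : 0 < (1-r)/2 := by linarith
    have hA := sq_nonneg (Real.cos φ * x 0 + Real.sin φ * x 1)
    have hB := sq_nonneg (Real.sin φ * x 0 - Real.cos φ * x 1)
    have hsum : (Real.cos φ * x 0 + Real.sin φ * x 1)^2
        + (Real.sin φ * x 0 - Real.cos φ * x 1)^2 = x 0^2 + x 1^2 := by
      linear_combination (x 0^2 + x 1^2) * hpy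
    set A := Real.cos φ * x 0 + Real.sin φ * x 1 with hAdef
    set B := Real.sin φ * x 0 - Real.cos φ * x 1 with hBdef
    rcases lt_or_ge 0 (A^2) with h | h
    · have t1 := mul_pos h1 h
      have t2 := mul_nonneg h2.le hB
      linarith
    · have hB' : 0 < B^2 := by nlinarith
      have t1 := mul_pos h2 hB'
      have t2 := mul_nonneg h1.le hA
      linarith
end
end

section
/- The function β ↦ I₁(β)/I₀(β) maps [0, ∞) onto [0, 1) and is strictly increasing; consequently, for every r with 0 ≤ r < 1 there exists a unique β(r) ∈ [0, ∞) with I₁(β(r))/I₀(β(r)) = r. -/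
open Real

noncomputable section

namespace Stmt17Aux

open MeasureTheory intervalIntegral Set Filter Topology

/-- `J k x = ∫₀^π e^{x cos θ} cos(kθ) dθ`. -/
def J (k : ℕ) (x : ℝ) : ℝ :=
  ∫ θ in (0:ℝ)..π, Real.exp (x * Real.cos θ) * Real.cos (k * θ)

lemma J0_eq (x : ℝ) : J 0 x = ∫ θ in (0:ℝ)..π, Real.exp (x * Real.cos θ) := by
  simp [J]

lemma J1_eq (x : ℝ) : J 1 x = ∫ θ in (0:ℝ)..π, Real.exp (x * Real.cos θ) * Real.cos θ := by
  simp [J]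

/-- `D x = ∫₀^π e^{x cos θ} cos²θ dθ`, the derivative of `J 1`. -/
def D (x : ℝ) : ℝ := ∫ θ in (0:ℝ)..π, Real.exp (x * Real.cos θ) * Real.cos θ ^ 2

lemma contw (x : ℝ) : Continuous fun θ : ℝ => Real.exp (x * Real.cos θ) := by fun_prop

lemma J0_pos (x : ℝ) : 0 < J 0 x := by
  rw [J0_eq]
  exact intervalIntegral_pos_of_pos ((contw x).intervalIntegrable _ _)
    (fun θ => Real.exp_pos _) pi_pos

lemma J1_lt_J0 (x : ℝ) : J 1 x < J 0 x := by
  rw [J0_eq, J1_eq]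
  have h : (0:ℝ) < ∫ θ in (0:ℝ)..π,
      (Real.exp (x * Real.cos θ) - Real.exp (x * Real.cos θ) * Real.cos θ) := by
    refine intervalIntegral_pos_of_pos_on (by apply Continuous.intervalIntegrable; fun_prop)
      (fun θ hθ => ?_) pi_pos
    have hc : Real.cos θ < 1 := by
      have := Real.cos_lt_cos_of_nonneg_of_le_pi le_rfl hθ.2.le hθ.1
      simpa using this
    have : Real.exp (x * Real.cos θ) * Real.cos θ < Real.exp (x * Real.cos θ) * 1 :=
      (mul_lt_mul_iff_right₀ (Real.exp_pos _)).2 hc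
    linarith [this]
  have := intervalIntegral.integral_sub ((contw x).intervalIntegrable _ _)
    (by apply Continuous.intervalIntegrable (μ := volume) (a := (0:ℝ)) (b := π); fun_prop :
      IntervalIntegrable (fun θ => Real.exp (x * Real.cos θ) * Real.cos θ) volume 0 π)
  rw [this] at h
  linarith

/-- Reflection: `J 1 x = ∫₀^{π/2} (e^{x cos t} - e^{-x cos t}) cos t dt`. -/
lemma J1_reflect (x : ℝ) : J 1 x =
    ∫ t in (0:ℝ)..(π/2),
      (Real.exp (x * Real.cos t) - Real.exp (-(x * Real.cos t))) * Real.cos t := by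
  have hint : ∀ a b : ℝ, IntervalIntegrable
      (fun θ => Real.exp (x * Real.cos θ) * Real.cos θ) volume a b := by
    intro a b; apply Continuous.intervalIntegrable; fun_prop
  have hsplit : (∫ θ in (0:ℝ)..(π/2), Real.exp (x * Real.cos θ) * Real.cos θ) +
      ∫ θ in (π/2:ℝ)..π, Real.exp (x * Real.cos θ) * Real.cos θ =
      ∫ θ in (0:ℝ)..π, Real.exp (x * Real.cos θ) * Real.cos θ :=
    intervalIntegral.integral_add_adjacent_intervals (hint _ _) (hint _ _)
  have hrefl : (∫ θ in (π/2:ℝ)..π, Real.exp (x * Real.cos θ) * Real.cos θ) =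
      ∫ u in (0:ℝ)..(π/2), Real.exp (-(x * Real.cos u)) * (-Real.cos u) := by
    have h1 : (∫ θ in (π/2:ℝ)..π, Real.exp (x * Real.cos θ) * Real.cos θ) =
        ∫ θ in (π/2:ℝ)..π,
          (fun u => Real.exp (-(x * Real.cos u)) * (-Real.cos u)) (π - θ) := by
      refine intervalIntegral.integral_congr fun θ _ => ?_
      simp [Real.cos_pi_sub]
    rw [h1, intervalIntegral.integral_comp_sub_left
      (fun u => Real.exp (-(x * Real.cos u)) * (-Real.cos u)) π, sub_self,
      show π - π/2 = π/2 by ring]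
  have hadd : (∫ t in (0:ℝ)..(π/2),
      (Real.exp (x * Real.cos t) - Real.exp (-(x * Real.cos t))) * Real.cos t) =
      (∫ θ in (0:ℝ)..(π/2), Real.exp (x * Real.cos θ) * Real.cos θ) +
      ∫ u in (0:ℝ)..(π/2), Real.exp (-(x * Real.cos u)) * (-Real.cos u) := by
    rw [← intervalIntegral.integral_add (hint _ _)
      (by apply Continuous.intervalIntegrable; fun_prop)]
    refine intervalIntegral.integral_congr fun t _ => ?_
    ring
  rw [J1_eq, ← hsplit, hrefl, hadd]

lemma J1_nonneg {x : ℝ} (hx : 0 ≤ x) : 0 ≤ J 1 x := by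
  rw [J1_reflect]
  refine intervalIntegral.integral_nonneg (by positivity) fun t ht => ?_
  have hc : 0 ≤ Real.cos t := Real.cos_nonneg_of_mem_Icc ⟨by linarith [ht.1, pi_pos], ht.2⟩
  have : Real.exp (-(x * Real.cos t)) ≤ Real.exp (x * Real.cos t) := by
    apply Real.exp_le_exp.2; nlinarith
  nlinarith

/-- Differentiation under the integral sign. -/
lemma hasDerivAt_J1 (x₀ : ℝ) : HasDerivAt (J 1) (D x₀) x₀ := by
  have key := intervalIntegral.hasDerivAt_integral_of_dominated_loc_of_deriv_le
    (F := fun x θ => Real.exp (x * Real.cos θ) * Real.cos ((1:ℕ) * θ))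
    (F' := fun x θ => Real.cos θ * (Real.exp (x * Real.cos θ) * Real.cos ((1:ℕ) * θ)))
    (x₀ := x₀) (a := 0) (b := π) (μ := volume)
    (bound := fun _ => Real.exp (|x₀| + 1)) (s := Metric.ball x₀ 1) (Metric.ball_mem_nhds x₀ one_pos)
    (Filter.Eventually.of_forall fun x =>
      (by fun_prop : Continuous fun θ : ℝ =>
        Real.exp (x * Real.cos θ) * Real.cos ((1:ℕ) * θ)).aestronglyMeasurable)
    (by apply Continuous.intervalIntegrable; fun_prop)
    ((by fun_prop : Continuous fun θ : ℝ =>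
      Real.cos θ * (Real.exp (x₀ * Real.cos θ) * Real.cos ((1:ℕ) * θ))).aestronglyMeasurable)
    (Filter.Eventually.of_forall fun θ _ x hx => by
      have h1 : |Real.cos θ| ≤ 1 := Real.abs_cos_le_one θ
      have h2 : |Real.cos ((1:ℕ) * θ)| ≤ 1 := Real.abs_cos_le_one _
      have hxb : x * Real.cos θ ≤ |x₀| + 1 := by
        have : |x| ≤ |x₀| + 1 := by
          have := abs_sub_abs_le_abs_sub x x₀
          have hd := Metric.mem_ball.1 hx
          rw [Real.dist_eq] at hd
          linarith
        calc x * Real.cos θ ≤ |x * Real.cos θ| := le_abs_self _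
          _ = |x| * |Real.cos θ| := abs_mul _ _
          _ ≤ |x₀| + 1 := by nlinarith [abs_nonneg x]
      calc ‖Real.cos θ * (Real.exp (x * Real.cos θ) * Real.cos ((1:ℕ) * θ))‖
          = |Real.cos θ| * (Real.exp (x * Real.cos θ) * |Real.cos ((1:ℕ) * θ)|) := by
            rw [Real.norm_eq_abs, abs_mul, abs_mul, abs_of_pos (Real.exp_pos _)]
        _ ≤ 1 * (Real.exp (x * Real.cos θ) * |Real.cos ((1:ℕ) * θ)|) :=
            mul_le_mul_of_nonneg_right h1 (by positivity)
        _ = Real.exp (x * Real.cos θ) * |Real.cos ((1:ℕ) * θ)| := one_mul _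
        _ ≤ Real.exp (x * Real.cos θ) :=
            mul_le_of_le_one_right (Real.exp_pos _).le h2
        _ ≤ Real.exp (|x₀| + 1) := Real.exp_le_exp.2 hxb)
    (by apply Continuous.intervalIntegrable; fun_prop)
    (Filter.Eventually.of_forall fun θ _ x _ => by
      have h : HasDerivAt (fun x : ℝ => Real.exp (x * Real.cos θ))
          (Real.exp (x * Real.cos θ) * Real.cos θ) x := by
        have := ((hasDerivAt_mul_const (Real.cos θ)).exp (x := x))
        simpa using this
      have := h.mul_const (Real.cos ((1:ℕ) * θ))
      exact this.congr_deriv (by ring))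
  have h2 := key.2
  have heq : (∫ θ in (0:ℝ)..π,
      Real.cos θ * (Real.exp (x₀ * Real.cos θ) * Real.cos ((1:ℕ) * θ))) = D x₀ := by
    rw [D]
    refine intervalIntegral.integral_congr fun θ _ => ?_
    push_cast
    rw [one_mul]
    ring
  rw [heq] at h2
  exact h2

lemma hasDerivAt_J0 (x₀ : ℝ) : HasDerivAt (J 0) (J 1 x₀) x₀ := by
  have key := intervalIntegral.hasDerivAt_integral_of_dominated_loc_of_deriv_le
    (F := fun x θ => Real.exp (x * Real.cos θ))
    (F' := fun x θ => Real.cos θ * Real.exp (x * Real.cos θ))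
    (x₀ := x₀) (a := 0) (b := π) (μ := volume)
    (bound := fun _ => Real.exp (|x₀| + 1)) (s := Metric.ball x₀ 1) (Metric.ball_mem_nhds x₀ one_pos)
    (Filter.Eventually.of_forall fun x => (contw x).aestronglyMeasurable)
    ((contw x₀).intervalIntegrable _ _)
    ((by fun_prop : Continuous fun θ : ℝ =>
      Real.cos θ * Real.exp (x₀ * Real.cos θ)).aestronglyMeasurable)
    (Filter.Eventually.of_forall fun θ _ x hx => by
      have h1 : |Real.cos θ| ≤ 1 := Real.abs_cos_le_one θ
      have hxb : x * Real.cos θ ≤ |x₀| + 1 := by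
        have : |x| ≤ |x₀| + 1 := by
          have := abs_sub_abs_le_abs_sub x x₀
          have hd := Metric.mem_ball.1 hx
          rw [Real.dist_eq] at hd
          linarith
        calc x * Real.cos θ ≤ |x * Real.cos θ| := le_abs_self _
          _ = |x| * |Real.cos θ| := abs_mul _ _
          _ ≤ |x₀| + 1 := by nlinarith [abs_nonneg x]
      calc ‖Real.cos θ * Real.exp (x * Real.cos θ)‖
          = |Real.cos θ| * Real.exp (x * Real.cos θ) := by
            rw [Real.norm_eq_abs, abs_mul, abs_of_pos (Real.exp_pos _)]
        _ ≤ 1 * Real.exp (x * Real.cos θ) :=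
            mul_le_mul_of_nonneg_right h1 (Real.exp_pos _).le
        _ = Real.exp (x * Real.cos θ) := one_mul _
        _ ≤ Real.exp (|x₀| + 1) := Real.exp_le_exp.2 hxb)
    (by apply Continuous.intervalIntegrable; fun_prop)
    (Filter.Eventually.of_forall fun θ _ x _ => by
      have := ((hasDerivAt_mul_const (Real.cos θ)).exp (x := x))
      exact this.congr_deriv (by ring))
  have h2 := key.2
  have heq : (∫ θ in (0:ℝ)..π, Real.cos θ * Real.exp (x₀ * Real.cos θ)) = J 1 x₀ := by
    rw [J1_eq]
    exact intervalIntegral.integral_congr fun θ _ => by ring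
  rw [heq] at h2
  rw [show J 0 = fun y => ∫ θ in (0:ℝ)..π, Real.exp (y * Real.cos θ) from funext J0_eq]
  exact h2

/-- Strict Cauchy–Schwarz: `(J 1 x)² < D · (J 0 x)` for `x ≥ 0`. -/
lemma key_ineq {x : ℝ} (hx : 0 ≤ x) : J 1 x * J 1 x < D x * J 0 x := by
  set c : ℝ := J 1 x / J 0 x with hc
  have hJ0 := J0_pos x
  have hcnn : 0 ≤ c := div_nonneg (J1_nonneg hx) hJ0.le
  have hint : ∀ a b : ℝ, IntervalIntegrable
      (fun θ => Real.exp (x * Real.cos θ) * (Real.cos θ - c) ^ 2) volume a b := by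
    intro a b; apply Continuous.intervalIntegrable; fun_prop
  -- positivity of ∫ w (cos θ - c)²
  have hpos : (0:ℝ) < ∫ θ in (0:ℝ)..π, Real.exp (x * Real.cos θ) * (Real.cos θ - c) ^ 2 := by
    have hlt1 : (2*π/3 : ℝ) < 5*π/6 := by linarith [pi_pos]
    have h23 : (0:ℝ) ≤ 2*π/3 := by linarith [pi_pos]
    have h56 : (5*π/6 : ℝ) ≤ π := by linarith [pi_pos]
    have hmid : (0:ℝ) < ∫ θ in (2*π/3 : ℝ)..(5*π/6),
        Real.exp (x * Real.cos θ) * (Real.cos θ - c) ^ 2 := by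
      refine intervalIntegral_pos_of_pos_on (hint _ _) (fun θ hθ => ?_) hlt1
      have hcos : Real.cos θ < Real.cos (2*π/3) :=
        Real.cos_lt_cos_of_nonneg_of_le_pi h23 (by linarith [hθ.2]) hθ.1
      have hval : Real.cos (2*π/3) = -(1/2) := by
        rw [show (2*π/3 : ℝ) = π - π/3 by ring, Real.cos_pi_sub, Real.cos_pi_div_three]
      rw [hval] at hcos
      have hne : Real.cos θ - c < 0 := by linarith
      have hsq : (0:ℝ) < (Real.cos θ - c) ^ 2 := by nlinarith
      exact mul_pos (Real.exp_pos _) hsq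
    have h1 : (0:ℝ) ≤ ∫ θ in (0:ℝ)..(2*π/3),
        Real.exp (x * Real.cos θ) * (Real.cos θ - c) ^ 2 :=
      intervalIntegral.integral_nonneg h23 fun θ _ => by positivity
    have h3 : (0:ℝ) ≤ ∫ θ in (5*π/6 : ℝ)..π,
        Real.exp (x * Real.cos θ) * (Real.cos θ - c) ^ 2 :=
      intervalIntegral.integral_nonneg h56 fun θ _ => by positivity
    have hs1 := intervalIntegral.integral_add_adjacent_intervals (a := (0:ℝ)) (b := 2*π/3)
      (c := 5*π/6) (hint _ _) (hint _ _)
    have hs2 := intervalIntegral.integral_add_adjacent_intervals (a := (0:ℝ)) (b := 5*π/6)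
      (c := π) (hint _ _) (hint _ _)
    rw [← hs2, ← hs1]
    linarith
  -- expand the square
  have hexp : (∫ θ in (0:ℝ)..π, Real.exp (x * Real.cos θ) * (Real.cos θ - c) ^ 2) =
      D x - 2*c * J 1 x + c^2 * J 0 x := by
    have e1 : (∫ θ in (0:ℝ)..π, Real.exp (x * Real.cos θ) * (Real.cos θ - c) ^ 2) =
        ∫ θ in (0:ℝ)..π, (Real.exp (x * Real.cos θ) * Real.cos θ ^ 2
          - 2*c * (Real.exp (x * Real.cos θ) * Real.cos θ)
          + c^2 * Real.exp (x * Real.cos θ)) :=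
      intervalIntegral.integral_congr fun θ _ => by ring
    rw [e1, intervalIntegral.integral_add (by apply IntervalIntegrable.sub <;>
        (apply Continuous.intervalIntegrable; fun_prop))
      (by apply Continuous.intervalIntegrable; fun_prop),
      intervalIntegral.integral_sub (by apply Continuous.intervalIntegrable; fun_prop)
        (by apply Continuous.intervalIntegrable; fun_prop),
      intervalIntegral.integral_const_mul, intervalIntegral.integral_const_mul,
      D, J1_eq, J0_eq]
  rw [hexp] at hpos
  have hcm : c * J 0 x = J 1 x := div_mul_cancel₀ _ hJ0.ne'
  nlinarith [mul_pos hJ0 hpos]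

/-- The ratio function. -/
def f (x : ℝ) : ℝ := J 1 x / J 0 x

lemma contJ0 : Continuous (J 0) :=
  continuous_iff_continuousAt.2 fun x => (hasDerivAt_J0 x).continuousAt

lemma contJ1 : Continuous (J 1) :=
  continuous_iff_continuousAt.2 fun x => (hasDerivAt_J1 x).continuousAt

lemma contf : Continuous f := contJ1.div contJ0 fun x => (J0_pos x).ne'

lemma hasDerivAt_f {x : ℝ} :
    HasDerivAt f ((D x * J 0 x - J 1 x * J 1 x) / (J 0 x)^2) x :=
  (hasDerivAt_J1 x).div (hasDerivAt_J0 x) (J0_pos x).ne'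

lemma f_zero : f 0 = 0 := by
  have : J 1 0 = 0 := by
    rw [J1_eq]
    simp [integral_cos]
  simp [f, this]

lemma f_lt_one (x : ℝ) : f x < 1 :=
  (div_lt_one (J0_pos x)).2 (J1_lt_J0 x)

lemma f_nonneg {x : ℝ} (hx : 0 ≤ x) : 0 ≤ f x :=
  div_nonneg (J1_nonneg hx) (J0_pos x).le

lemma strictMonoOn_f : StrictMonoOn f (Set.Ici 0) := by
  apply strictMonoOn_of_deriv_pos (convex_Ici 0) contf.continuousOn
  intro x hx
  rw [interior_Ici] at hx
  rw [hasDerivAt_f.deriv]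
  have := key_ineq (x := x) hx.le
  have h0 := J0_pos x
  apply div_pos (by linarith) (by positivity)

/-- The crucial limit: `f x → 1` as `x → ∞`. -/
lemma tendsto_f : Tendsto f atTop (𝓝 1) := by
  rw [Metric.tendsto_atTop]
  intro ε hε
  -- choose δ
  have htend : Tendsto (fun t : ℝ => 1 - Real.cos t) (𝓝[>] 0) (𝓝 0) := by
    have : Tendsto (fun t : ℝ => 1 - Real.cos t) (𝓝 0) (𝓝 0) := by
      have h : Continuous fun t : ℝ => 1 - Real.cos t := by fun_prop
      simpa using h.tendsto 0
    exact this.mono_left nhdsWithin_le_nhds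
  have h2 : ∀ᶠ t in 𝓝[>] (0:ℝ), 1 - Real.cos t < ε/2 :=
    htend.eventually (eventually_lt_nhds (by positivity))
  have h3 : ∀ᶠ t in 𝓝[>] (0:ℝ), t ∈ Set.Ioo (0:ℝ) (π/2) :=
    Ioo_mem_nhdsGT_of_mem ⟨le_refl 0, by positivity⟩
  obtain ⟨δ, hδε, hδ0, hδπ2⟩ : ∃ δ : ℝ, 1 - Real.cos δ < ε/2 ∧ 0 < δ ∧ δ < π/2 := by
    obtain ⟨δ, h1, h2⟩ := (h2.and h3).exists
    exact ⟨δ, h1, h2.1, h2.2⟩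
  have hδπ : δ < π := by linarith [pi_pos]
  obtain ⟨d, hd⟩ : ∃ d : ℝ, d = Real.cos (δ/2) - Real.cos δ := ⟨_, rfl⟩
  have hdpos : 0 < d := by
    have := Real.cos_lt_cos_of_nonneg_of_le_pi (x := δ/2) (y := δ) (by positivity)
      hδπ.le (by linarith)
    linarith
  -- eventually the exponential term is small
  have hexp : Tendsto (fun x : ℝ => Real.exp (x * d)) atTop atTop :=
    Real.tendsto_exp_atTop.comp (Tendsto.atTop_mul_const hdpos tendsto_id)
  have hev : ∀ᶠ x in atTop, 8*π/(ε*δ) < Real.exp (x * d) := hexp.eventually_gt_atTop _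
  have hev0 : ∀ᶠ x in atTop, (0:ℝ) ≤ x := eventually_ge_atTop 0
  obtain ⟨N, hN⟩ := (hev.and hev0).exists_forall_of_atTop
  refine ⟨N, fun x hxN => ?_⟩
  obtain ⟨hNexp, hx0⟩ := hN x hxN
  -- now the estimates
  have hwint : ∀ a b : ℝ, IntervalIntegrable
      (fun θ => Real.exp (x * Real.cos θ)) volume a b :=
    fun a b => (contw x).intervalIntegrable a b
  have hwcint : ∀ a b : ℝ, IntervalIntegrable
      (fun θ => Real.exp (x * Real.cos θ) * (1 - Real.cos θ)) volume a b := by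
    intro a b; apply Continuous.intervalIntegrable; fun_prop
  have hJ0 := J0_pos x
  -- (J 0 x) - (J 1 x) = ∫ w (1 - cos)
  have hdiff : (J 0 x) - (J 1 x) = ∫ θ in (0:ℝ)..π, Real.exp (x * Real.cos θ) * (1 - Real.cos θ) := by
    have : (∫ θ in (0:ℝ)..π, Real.exp (x * Real.cos θ) * (1 - Real.cos θ)) =
        (∫ θ in (0:ℝ)..π, Real.exp (x * Real.cos θ)) -
        ∫ θ in (0:ℝ)..π, Real.exp (x * Real.cos θ) * Real.cos θ := by
      rw [← intervalIntegral.integral_sub (hwint _ _)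
        (by apply Continuous.intervalIntegrable; fun_prop)]
      exact intervalIntegral.integral_congr fun θ _ => by ring
    rw [this, ← J0_eq, ← J1_eq]
  -- part A : ∫₀^δ w(1-cos) ≤ (ε/2) (J 0 x)
  have hA : (∫ θ in (0:ℝ)..δ, Real.exp (x * Real.cos θ) * (1 - Real.cos θ)) ≤ ε/2 * (J 0 x) := by
    have step1 : (∫ θ in (0:ℝ)..δ, Real.exp (x * Real.cos θ) * (1 - Real.cos θ)) ≤
        ∫ θ in (0:ℝ)..δ, (ε/2) * Real.exp (x * Real.cos θ) := by
      refine intervalIntegral.integral_mono_on hδ0.le (hwcint _ _)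
        (by apply Continuous.intervalIntegrable; fun_prop) fun θ hθ => ?_
      have hc : Real.cos δ ≤ Real.cos θ :=
        Real.cos_le_cos_of_nonneg_of_le_pi hθ.1 hδπ.le hθ.2
      have h1 : 1 - Real.cos θ ≤ 1 - Real.cos δ := by linarith
      have h1' : 0 ≤ 1 - Real.cos θ := by linarith [Real.cos_le_one θ]
      nlinarith [Real.exp_pos (x * Real.cos θ)]
    have step2 : (∫ θ in (0:ℝ)..δ, Real.exp (x * Real.cos θ)) ≤ (J 0 x) := by
      rw [J0_eq]
      exact intervalIntegral.integral_mono_interval le_rfl hδ0.le hδπ.le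
        (Filter.Eventually.of_forall fun θ => (Real.exp_pos _).le) (hwint _ _)
    calc (∫ θ in (0:ℝ)..δ, Real.exp (x * Real.cos θ) * (1 - Real.cos θ))
        ≤ ∫ θ in (0:ℝ)..δ, (ε/2) * Real.exp (x * Real.cos θ) := step1
      _ = (ε/2) * ∫ θ in (0:ℝ)..δ, Real.exp (x * Real.cos θ) :=
          intervalIntegral.integral_const_mul _ _
      _ ≤ ε/2 * (J 0 x) := by nlinarith
  -- part B : ∫_δ^π w(1-cos) ≤ 2π exp(x cos δ)
  have hB : (∫ θ in δ..π, Real.exp (x * Real.cos θ) * (1 - Real.cos θ)) ≤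
      2*π * Real.exp (x * Real.cos δ) := by
    have step1 : (∫ θ in δ..π, Real.exp (x * Real.cos θ) * (1 - Real.cos θ)) ≤
        ∫ _θ in δ..π, 2 * Real.exp (x * Real.cos δ) := by
      refine intervalIntegral.integral_mono_on hδπ.le (hwcint _ _)
        intervalIntegrable_const fun θ hθ => ?_
      have hc : Real.cos θ ≤ Real.cos δ :=
        Real.cos_le_cos_of_nonneg_of_le_pi hδ0.le hθ.2 hθ.1
      have he : Real.exp (x * Real.cos θ) ≤ Real.exp (x * Real.cos δ) := by
        apply Real.exp_le_exp.2; nlinarith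
      have h1 : 1 - Real.cos θ ≤ 2 := by linarith [Real.neg_one_le_cos θ]
      have h1' : 0 ≤ 1 - Real.cos θ := by linarith [Real.cos_le_one θ]
      nlinarith [Real.exp_pos (x * Real.cos θ)]
    rw [intervalIntegral.integral_const] at step1
    have : (π - δ) • (2 * Real.exp (x * Real.cos δ)) ≤ 2*π * Real.exp (x * Real.cos δ) := by
      rw [smul_eq_mul]
      nlinarith [Real.exp_pos (x * Real.cos δ), hδ0]
    linarith
  -- lower bound for (J 0 x)
  have hC : δ/2 * Real.exp (x * Real.cos (δ/2)) ≤ (J 0 x) := by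
    have step1 : (∫ _θ in (0:ℝ)..(δ/2), Real.exp (x * Real.cos (δ/2))) ≤
        ∫ θ in (0:ℝ)..(δ/2), Real.exp (x * Real.cos θ) := by
      refine intervalIntegral.integral_mono_on (by linarith) intervalIntegrable_const
        (hwint _ _) fun θ hθ => ?_
      have hc : Real.cos (δ/2) ≤ Real.cos θ :=
        Real.cos_le_cos_of_nonneg_of_le_pi hθ.1 (by linarith) hθ.2
      apply Real.exp_le_exp.2; nlinarith
    rw [intervalIntegral.integral_const, smul_eq_mul, sub_zero] at step1
    have step2 : (∫ θ in (0:ℝ)..(δ/2), Real.exp (x * Real.cos θ)) ≤ (J 0 x) := by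
      rw [J0_eq]
      exact intervalIntegral.integral_mono_interval le_rfl (by linarith) (by linarith)
        (Filter.Eventually.of_forall fun θ => (Real.exp_pos _).le) (hwint _ _)
    linarith
  -- the exponential term bound
  have hexpterm : 2*π * Real.exp (x * Real.cos δ) < ε/2 * (δ/2 * Real.exp (x * Real.cos (δ/2))) := by
    have h8 : 8*π/(ε*δ) < Real.exp (x * d) := hNexp
    have hxd : Real.exp (x * d) = Real.exp (x * Real.cos (δ/2)) / Real.exp (x * Real.cos δ) := by
      rw [← Real.exp_sub]; congr 1; rw [hd]; ring
    rw [hxd] at h8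
    have hep := Real.exp_pos (x * Real.cos δ)
    have hep2 := Real.exp_pos (x * Real.cos (δ/2))
    rw [div_lt_div_iff₀ (by positivity) hep] at h8
    linarith
  -- put together
  have hsplit : (∫ θ in (0:ℝ)..π, Real.exp (x * Real.cos θ) * (1 - Real.cos θ)) =
      (∫ θ in (0:ℝ)..δ, Real.exp (x * Real.cos θ) * (1 - Real.cos θ)) +
      ∫ θ in δ..π, Real.exp (x * Real.cos θ) * (1 - Real.cos θ) :=
    (intervalIntegral.integral_add_adjacent_intervals (hwcint _ _) (hwcint _ _)).symm
  have hfinal : (J 0 x) - (J 1 x) < ε * (J 0 x) := by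
    rw [hdiff, hsplit]
    have : 2*π * Real.exp (x * Real.cos δ) < ε/2 * (J 0 x) := by
      calc 2*π * Real.exp (x * Real.cos δ)
          < ε/2 * (δ/2 * Real.exp (x * Real.cos (δ/2))) := hexpterm
        _ ≤ ε/2 * (J 0 x) := by nlinarith
    linarith
  have hf1 : f x < 1 := f_lt_one x
  have : 1 - f x < ε := by
    have : ((J 0 x) - (J 1 x))/(J 0 x) < ε := by
      rw [div_lt_iff₀ hJ0]; nlinarith
    have heq : 1 - f x = ((J 0 x) - (J 1 x))/(J 0 x) := by
      rw [f]
      field_simp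
    linarith [heq ▸ this]
  rw [Real.dist_eq, abs_of_nonpos (by linarith)]
  linarith

/-- Main result, in terms of `f`. -/
lemma main :
    StrictMonoOn f (Set.Ici 0) ∧ f '' Set.Ici 0 = Set.Ico 0 1 ∧
    ∀ r : ℝ, 0 ≤ r → r < 1 → ∃! β : ℝ, 0 ≤ β ∧ f β = r := by
  have hmono := strictMonoOn_f
  have himg : f '' Set.Ici 0 = Set.Ico 0 1 := by
    apply Set.Subset.antisymm
    · rintro y ⟨x, hx, rfl⟩
      exact ⟨f_nonneg hx, f_lt_one x⟩
    · rintro r ⟨hr0, hr1⟩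
      have hev : ∀ᶠ x in atTop, r < f x := tendsto_f.eventually (eventually_gt_nhds hr1)
      obtain ⟨b, hb⟩ := (hev.and (eventually_ge_atTop 0)).exists
      have hsub := intermediate_value_Icc hb.2 (contf.continuousOn (s := Set.Icc 0 b))
      have hr : r ∈ Set.Icc (f 0) (f b) := ⟨by rw [f_zero]; exact hr0, hb.1.le⟩
      obtain ⟨β, hβ, hfβ⟩ := hsub hr
      exact ⟨β, hβ.1, hfβ⟩
  refine ⟨hmono, himg, fun r hr0 hr1 => ?_⟩
  have : r ∈ Set.Ico (0:ℝ) 1 := ⟨hr0, hr1⟩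
  rw [← himg] at this
  obtain ⟨β, hβ, hfβ⟩ := this
  refine ⟨β, ⟨hβ, hfβ⟩, fun y hy => ?_⟩
  exact hmono.injOn hy.1 hβ (hy.2.trans hfβ.symm)

lemma besselI_ratio (x : ℝ) : besselI 1 x / besselI 0 x = f x := by
  rw [besselI, besselI, f, J, J]
  rw [mul_div_mul_left _ _ (one_div_ne_zero pi_ne_zero)]

end Stmt17Aux

/-- β ↦ I₁(β)/I₀(β) is strictly increasing on [0,∞) and maps it onto [0,1);
    hence for every 0 ≤ r < 1 there is a unique β ≥ 0 with I₁(β)/I₀(β) = r. -/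
theorem stmt17 :
    StrictMonoOn (fun β => besselI 1 β / besselI 0 β) (Set.Ici 0) ∧
    (fun β => besselI 1 β / besselI 0 β) '' Set.Ici 0 = Set.Ico 0 1 ∧
    ∀ r : ℝ, 0 ≤ r → r < 1 →
      ∃! β : ℝ, 0 ≤ β ∧ besselI 1 β / besselI 0 β = r := by
  simp only [Stmt17Aux.besselI_ratio]
  exact Stmt17Aux.main
end
end
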